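/- arXiv:1802.01564 — 2 statements merged into one kernel-verified Lean document; each statement's English description precedes it below -/
import Mathlib

section
/- Let $Q_r \subset \mathbb{R}^n$ be a closed cube of side length $r > 0$ and let $A \subseteq \mathbb{R}^n$ be open. Suppose there exists $c_\sharp \in (0,1)$ such that $\min\{|A \cap Q_r|, |Q_r \setminus \overline{A}|\} \ge c_\sharp r^n$. For $k \in \mathbb{N}$, let $\mathcal{P}$ be the partition of $Q_r$ into $k^n$ closed subcubes of side $r/k$ with sides parallel to those of $Q_r$. Then the number of cubes $Q \in \mathcal{P}$ with $Q \cap \partial A \ne \varnothing$ is at least $c_\star k^{n-1}$, for some constant $c_\star \in (0,1)$ depending only on $n$ and $c_\sharp$. -/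
/-!
Sort the cells of the grid into those inside `A`, those outside `closure A`, and those meeting
`∂A`. A cell is connected, so these cases are exhaustive, and touching cells share a point, so
cells of the first two kinds never touch. By the volume hypothesis each of the first two kinds,
together with the boundary cells, has at least `c♯ kⁿ` members. This reduces the theorem to a
discrete isoperimetric inequality in the grid `{0, …, k-1}ⁿ`, proved by induction on `n`:
either many lines in the first coordinate direction meet a boundary cell, and distinct lines give
distinct boundary cells, or most lines carry a single kind of cell, and then every slice
orthogonal to that direction again has many cells of each of the first two kinds, so the
induction hypothesis applies to each of the `k` slices.
-/

open MeasureTheory Set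
open scoped Classical

section Grid

variable {m k : ℕ}

/-- The closed cells indexed by `x` and `y` share a point (`x = y` and diagonal neighbours
included). -/
def GridAdj (x y : Fin m → Fin k) : Prop :=
  ∀ i, (x i : ℕ) ≤ y i + 1 ∧ (y i : ℕ) ≤ x i + 1

lemma GridAdj.refl (x : Fin m → Fin k) : GridAdj x x :=
  fun _ => by omega

lemma GridAdj.symm {x y : Fin m → Fin k} (h : GridAdj x y) : GridAdj y x :=
  fun i => (h i).symm

lemma gridAdj_cons_cons {s t : Fin k} {p q : Fin m → Fin k} :
    GridAdj (Fin.cons s p : Fin (m + 1) → Fin k) (Fin.cons t q) ↔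
      ((s : ℕ) ≤ t + 1 ∧ (t : ℕ) ≤ s + 1) ∧ GridAdj p q := by
  simp only [GridAdj, Fin.forall_fin_succ, Fin.cons_zero, Fin.cons_succ]

def GridSeparated (W B : Finset (Fin m → Fin k)) : Prop :=
  ∀ w ∈ W, ∀ b ∈ B, ¬ GridAdj w b

lemma GridSeparated.symm {W B : Finset (Fin m → Fin k)} (h : GridSeparated W B) :
    GridSeparated B W :=
  fun b hb w hw hbw => h w hw b hb hbw.symm

def slab (S : Finset (Fin (m + 1) → Fin k)) (s : Fin k) : Finset (Fin m → Fin k) :=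
  Finset.univ.filter fun p => Fin.cons s p ∈ S

@[simp]
lemma mem_slab {S : Finset (Fin (m + 1) → Fin k)} {s : Fin k} {p : Fin m → Fin k} :
    p ∈ slab S s ↔ Fin.cons s p ∈ S := by
  simp [slab]

lemma card_eq_sum_card_slab (S : Finset (Fin (m + 1) → Fin k)) :
    S.card = ∑ s, (slab S s).card := by
  rw [Finset.card_eq_sum_card_fiberwise (f := fun x => x 0) (t := Finset.univ)
    (fun _ _ => Finset.mem_univ _)]
  refine Finset.sum_congr rfl fun s _ => Finset.card_nbij' Fin.tail
    (fun p => (Fin.cons s p : Fin (m + 1) → Fin k)) ?_ ?_ ?_ ?_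
  · intro x hx
    obtain ⟨hxS, rfl⟩ := Finset.mem_filter.1 hx
    simpa using hxS
  · intro p hp
    simpa using mem_slab.1 hp
  · intro x hx
    obtain ⟨-, rfl⟩ := Finset.mem_filter.1 hx
    exact Fin.cons_self_tail x
  · intro p _
    exact Fin.tail_cons (α := fun _ => Fin k) s p

lemma GridSeparated.slab {W B : Finset (Fin (m + 1) → Fin k)} (h : GridSeparated W B)
    (s : Fin k) : GridSeparated (slab W s) (slab B s) := by
  intro p hp q hq hpq
  rw [mem_slab] at hp hq
  exact h _ hp _ hq (gridAdj_cons_cons.2 ⟨by omega, hpq⟩)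

variable {W B G : Finset (Fin (m + 1) → Fin k)}

/-- A walk from `s` to `t` in the path graph on `Fin k` leaves `W` somewhere; the cell it
enters there touches a cell of `W`, so it lies in `G`. -/
lemma exists_cons_mem_of_separated (hcover : ∀ x, x ∈ W ∨ x ∈ B ∨ x ∈ G)
    (hsep : GridSeparated W B) {p : Fin m → Fin k} {s t : Fin k} (hs : Fin.cons s p ∈ W)
    (ht : Fin.cons t p ∈ B) : ∃ u, Fin.cons u p ∈ G := by
  obtain ⟨k, rfl⟩ : ∃ k', k = k' + 1 := Nat.exists_eq_succ_of_ne_zero s.pos.ne'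
  obtain ⟨walk⟩ := (SimpleGraph.pathGraph_connected k).preconnected s t
  obtain ⟨d, -, hdW, hdW'⟩ :=
    walk.exists_boundary_dart {u | (Fin.cons u p : Fin (m + 1) → Fin (k + 1)) ∈ W} hs
      fun htW => hsep _ htW _ ht (.refl _)
  refine ⟨d.toProd.2, ?_⟩
  rcases hcover (Fin.cons d.toProd.2 p) with h | h | h
  · exact absurd h hdW'
  · have hd := SimpleGraph.pathGraph_adj.1 d.adj
    exact absurd (gridAdj_cons_cons.2 ⟨by omega, .refl p⟩) (hsep _ hdW _ h)
  · exact h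

/-- The lines meeting `G` are indexed by `G.image Fin.tail`; every other line through a cell of
`W` lies in `W`, so it is counted in every slice of `W`. -/
lemma le_card_slab (hk : 0 < k) (hcover : ∀ x, x ∈ W ∨ x ∈ B ∨ x ∈ G)
    (hsep : GridSeparated W B) {δ : ℝ} (hW : δ * k ^ (m + 1) ≤ W.card) (t : Fin k) :
    δ * k ^ m - (G.image Fin.tail).card ≤ (slab W t).card := by
  set P := Finset.univ.filter fun p : Fin m → Fin k => ∀ s, Fin.cons s p ∈ W
  have hslab : ∀ s, slab W s ⊆ G.image Fin.tail ∪ P := by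
    intro s p hp
    rw [mem_slab] at hp
    by_cases hpG : p ∈ G.image Fin.tail
    · exact Finset.mem_union_left _ hpG
    refine Finset.mem_union_right _ (Finset.mem_filter.2 ⟨Finset.mem_univ _, fun u => ?_⟩)
    have hline : ∀ v, Fin.cons v p ∉ G := fun v hv =>
      hpG (Finset.mem_image.2 ⟨_, hv, Fin.tail_cons (α := fun _ => Fin k) v p⟩)
    rcases hcover (Fin.cons u p) with h | h | h
    · exact h
    · exact absurd (exists_cons_mem_of_separated hcover hsep hp h) (by simpa using hline)
    · exact absurd h (hline u)
  have hcount : W.card ≤ k * ((G.image Fin.tail).card + P.card) := by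
    rw [card_eq_sum_card_slab W]
    calc ∑ s, (slab W s).card ≤ ∑ _s : Fin k, ((G.image Fin.tail).card + P.card) :=
          Finset.sum_le_sum fun s _ =>
            (Finset.card_le_card (hslab s)).trans (Finset.card_union_le _ _)
      _ = _ := by simp
  have hP : P ⊆ slab W t := fun p hp => mem_slab.2 ((Finset.mem_filter.1 hp).2 t)
  have hk' : (0 : ℝ) < k := by exact_mod_cast hk
  have hlines : δ * k ^ m ≤ (G.image Fin.tail).card + P.card := by
    refine le_of_mul_le_mul_left ?_ hk'
    calc k * (δ * k ^ m) = δ * k ^ (m + 1) := by ring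
      _ ≤ W.card := hW
      _ ≤ _ := by exact_mod_cast hcount
  have : (P.card : ℝ) ≤ (slab W t).card := by exact_mod_cast Finset.card_le_card hP
  linarith

end Grid

theorem grid_isoperimetric {k : ℕ} (hk : 0 < k) (m : ℕ) {δ : ℝ} (hδ : 0 < δ)
    {W B G : Finset (Fin m → Fin k)} (hcover : ∀ x, x ∈ W ∨ x ∈ B ∨ x ∈ G)
    (hsep : GridSeparated W B) (hW : δ * k ^ m ≤ W.card) (hB : δ * k ^ m ≤ B.card) :
    δ / 2 ^ m * k ^ (m - 1) ≤ G.card := by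
  induction m generalizing δ with
  | zero =>
    rw [pow_zero, mul_one] at hW hB
    obtain ⟨w, hw⟩ := Finset.card_pos.1 (by exact_mod_cast hδ.trans_le hW)
    obtain ⟨b, hb⟩ := Finset.card_pos.1 (by exact_mod_cast hδ.trans_le hB)
    exact absurd (Subsingleton.elim w b ▸ .refl w) (hsep w hw b hb)
  | succ m ih =>
    rw [Nat.add_sub_cancel]
    have hk1 : (1 : ℝ) ≤ k := by exact_mod_cast hk
    have hlinesG : ((G.image Fin.tail).card : ℝ) ≤ G.card := by
      exact_mod_cast Finset.card_image_le
    by_cases hlines : δ / 2 * k ^ m ≤ (G.image Fin.tail).card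
    · calc δ / 2 ^ (m + 1) * k ^ m ≤ δ / 2 * k ^ m := by
            gcongr
            exact le_self_pow₀ (by norm_num) (by omega)
        _ ≤ G.card := hlines.trans hlinesG
    push Not at hlines
    have hcover' : ∀ x, x ∈ B ∨ x ∈ W ∨ x ∈ G := fun x => by
      rcases hcover x with h | h | h <;> simp [h]
    have hslab : ∀ t, δ / 2 / 2 ^ m * k ^ (m - 1) ≤ (slab G t).card := fun t =>
      ih (half_pos hδ) (fun p => by simpa using hcover (Fin.cons t p)) (hsep.slab t)
        (by linarith [le_card_slab hk hcover hsep hW t])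
        (by linarith [le_card_slab hk hcover' hsep.symm hB t])
    have hpow : (k : ℝ) ^ m ≤ k * k ^ (m - 1) := by
      rw [← pow_succ']
      exact pow_le_pow_right₀ hk1 (by omega)
    calc δ / 2 ^ (m + 1) * k ^ m = δ / 2 / 2 ^ m * k ^ m := by rw [pow_succ', div_div]
      _ ≤ δ / 2 / 2 ^ m * (k * k ^ (m - 1)) := by gcongr
      _ = ∑ _t : Fin k, δ / 2 / 2 ^ m * k ^ (m - 1) := by
          simp only [Finset.sum_const, Finset.card_univ, Fintype.card_fin, nsmul_eq_mul]
          ring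
      _ ≤ ∑ t, ((slab G t).card : ℝ) := Finset.sum_le_sum fun t _ => hslab t
      _ = G.card := by rw [card_eq_sum_card_slab G]; push_cast; rfl

theorem grid_isoperimetric_of_le_add {k : ℕ} (hk : 0 < k) (m : ℕ) {δ : ℝ} (hδ : 0 < δ)
    {W B G : Finset (Fin m → Fin k)} (hcover : ∀ x, x ∈ W ∨ x ∈ B ∨ x ∈ G)
    (hsep : GridSeparated W B) (hW : δ * k ^ m ≤ W.card + G.card)
    (hB : δ * k ^ m ≤ B.card + G.card) :
    δ / 2 ^ (m + 1) * k ^ (m - 1) ≤ G.card := by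
  by_cases hG : δ / 2 * k ^ m ≤ G.card
  · refine le_trans ?_ hG
    have hk1 : (1 : ℝ) ≤ k := by exact_mod_cast hk
    exact mul_le_mul
      (div_le_div_of_nonneg_left hδ.le two_pos (le_self_pow₀ one_le_two (by omega)))
      (pow_le_pow_right₀ hk1 (Nat.sub_le m 1)) (by positivity) (by positivity)
  push Not at hG
  have h := grid_isoperimetric hk m (half_pos hδ) hcover hsep (by linarith) (by linarith)
  rwa [div_div, ← pow_succ'] at h

lemma IsPreconnected.subset_interior_or_subset_compl_closure {X : Type*} [TopologicalSpace X]
    {s A : Set X} (hs : IsPreconnected s) (hsA : ¬ (s ∩ frontier A).Nonempty) :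
    s ⊆ interior A ∨ s ⊆ (closure A)ᶜ := by
  refine hs.subset_or_subset isOpen_interior isClosed_closure.isOpen_compl
    (disjoint_compl_right.mono_left interior_subset_closure) fun x hx => ?_
  by_contra hx'
  simp only [mem_union, mem_compl_iff, not_or, not_not] at hx'
  exact hsA ⟨x, hx, hx'.2, hx'.1⟩

section Cells

variable {n k : ℕ}

def gridCell (a : Fin n → ℝ) (h : ℝ) (j : Fin n → Fin k) : Set (Fin n → ℝ) :=
  {y | ∀ i, a i + (j i : ℝ) * h ≤ y i ∧ y i ≤ a i + ((j i : ℝ) + 1) * h}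

lemma gridCell_eq_pi (a : Fin n → ℝ) (h : ℝ) (j : Fin n → Fin k) :
    gridCell a h j =
      Set.univ.pi fun i => Icc (a i + (j i : ℝ) * h) (a i + ((j i : ℝ) + 1) * h) := by
  ext y
  simp only [Set.mem_univ_pi, Set.mem_Icc]
  rfl

lemma volume_gridCell (a : Fin n → ℝ) (h : ℝ) (j : Fin n → Fin k) :
    volume (gridCell a h j) = ENNReal.ofReal h ^ n := by
  simp only [gridCell_eq_pi, volume_pi_pi, Real.volume_Icc]
  simp [add_mul]

lemma convex_gridCell (a : Fin n → ℝ) (h : ℝ) (j : Fin n → Fin k) :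
    Convex ℝ (gridCell a h j) := by
  rw [gridCell_eq_pi]
  exact convex_pi fun _ _ => convex_Icc _ _

lemma exists_fin_mul_le_le_succ_mul (hk : 0 < k) {h t : ℝ} (hh : 0 < h)
    (ht : t ∈ Icc 0 (k * h)) :
    ∃ j : Fin k, (j : ℝ) * h ≤ t ∧ t ≤ ((j : ℝ) + 1) * h := by
  rcases ht.2.lt_or_eq with hlt | rfl
  · have hfloor : ⌊t / h⌋₊ < k := by
      rw [Nat.floor_lt (div_nonneg ht.1 hh.le), div_lt_iff₀ hh]
      exact hlt
    refine ⟨⟨_, hfloor⟩, ?_, ?_⟩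
    · exact (le_div_iff₀ hh).1 (Nat.floor_le (div_nonneg ht.1 hh.le))
    · exact ((div_lt_iff₀ hh).1 (Nat.lt_floor_add_one (t / h))).le
  · refine ⟨⟨k - 1, by omega⟩, ?_, ?_⟩ <;>
      simp only [Nat.cast_sub hk, Nat.cast_one] <;> linarith

lemma exists_mem_gridCell (hk : 0 < k) {a y : Fin n → ℝ} {h : ℝ} (hh : 0 < h)
    (hy : ∀ i, y i ∈ Icc (a i) (a i + k * h)) : ∃ j : Fin n → Fin k, y ∈ gridCell a h j := by
  have hcoord : ∀ i, ∃ j : Fin k, (j : ℝ) * h ≤ y i - a i ∧ y i - a i ≤ ((j : ℝ) + 1) * h :=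
    fun i => exists_fin_mul_le_le_succ_mul hk hh
      ⟨sub_nonneg.2 (hy i).1, sub_le_iff_le_add'.2 (hy i).2⟩
  choose j hj using hcoord
  exact ⟨j, fun i => ⟨by linarith [hj i], by linarith [hj i]⟩⟩

lemma gridCell_inter_nonempty {a : Fin n → ℝ} {h : ℝ} (hh : 0 ≤ h) {j j' : Fin n → Fin k}
    (hadj : GridAdj j j') : (gridCell a h j ∩ gridCell a h j').Nonempty := by
  have hcorner : ∀ {u v : ℝ}, u ≤ v + 1 → v ≤ u + 1 →
      u * h ≤ max u v * h ∧ max u v * h ≤ (u + 1) * h := fun huv hvu =>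
    ⟨mul_le_mul_of_nonneg_right (le_max_left _ _) hh,
      mul_le_mul_of_nonneg_right (max_le (by linarith) hvu) hh⟩
  refine ⟨fun i => a i + max (j i : ℝ) (j' i) * h, fun i => ?_, fun i => ?_⟩
  · have := hcorner (u := j i) (v := j' i) (by exact_mod_cast (hadj i).1)
      (by exact_mod_cast (hadj i).2)
    constructor <;> linarith [this.1, this.2]
  · have := hcorner (u := j' i) (v := j i) (by exact_mod_cast (hadj i).2)
      (by exact_mod_cast (hadj i).1)
    rw [max_comm] at this
    constructor <;> linarith [this.1, this.2]

lemma toReal_volume_le_of_subset_biUnion_gridCell {a : Fin n → ℝ} {h : ℝ} (hh : 0 ≤ h)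
    {S : Set (Fin n → ℝ)} {F : Finset (Fin n → Fin k)} (hS : S ⊆ ⋃ j ∈ F, gridCell a h j) :
    (volume S).toReal ≤ F.card * h ^ n := by
  have hle : volume S ≤ F.card * ENNReal.ofReal (h ^ n) := by
    calc volume S ≤ ∑ j ∈ F, volume (gridCell a h j) :=
          (measure_mono hS).trans (measure_biUnion_finset_le F _)
      _ = F.card * ENNReal.ofReal (h ^ n) := by
          simp [volume_gridCell, ENNReal.ofReal_pow hh]
  simpa [ENNReal.toReal_ofReal (pow_nonneg hh n)] using
    ENNReal.toReal_mono (by finiteness) hle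

lemma cube_subset_iUnion_gridCell (hk : 0 < k) {r : ℝ} (hr : 0 < r) (c : Fin n → ℝ) :
    {y : Fin n → ℝ | ∀ i, |y i - c i| ≤ r / 2} ⊆
      ⋃ j : Fin n → Fin k, gridCell (fun i => c i - r / 2) (r / k) j := by
  intro y hy
  refine Set.mem_iUnion.2 (exists_mem_gridCell hk (by positivity) fun i => ?_)
  have := abs_le.1 (hy i)
  rw [mul_div_cancel₀ r (Nat.cast_ne_zero.2 hk.ne')]
  constructor <;> linarith

lemma mul_pow_le_card_of_inter_nonempty (hk : 0 < k) {r δ : ℝ} (hr : 0 < r)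
    {c : Fin n → ℝ} {S : Set (Fin n → ℝ)} (hS : S ⊆ {y | ∀ i, |y i - c i| ≤ r / 2})
    {F : Finset (Fin n → Fin k)}
    (hF : ∀ j, (gridCell (fun i => c i - r / 2) (r / k) j ∩ S).Nonempty → j ∈ F)
    (hvol : δ * r ^ n ≤ (volume S).toReal) :
    δ * k ^ n ≤ F.card := by
  have hSF : S ⊆ ⋃ j ∈ F, gridCell (fun i => c i - r / 2) (r / k) j := fun y hy => by
    obtain ⟨j, hj⟩ := Set.mem_iUnion.1 (cube_subset_iUnion_gridCell hk hr c (hS hy))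
    exact Set.mem_biUnion (hF j ⟨y, hj, hy⟩) hj
  have hk' : (0 : ℝ) < k := by exact_mod_cast hk
  have h := hvol.trans (toReal_volume_le_of_subset_biUnion_gridCell (by positivity) hSF)
  rw [div_pow, ← mul_div_assoc, le_div_iff₀ (by positivity)] at h
  exact le_of_mul_le_mul_right (by linarith) (pow_pos hr n)

variable (k) (a : Fin n → ℝ) (h : ℝ) (A : Set (Fin n → ℝ))

noncomputable def innerCells : Finset (Fin n → Fin k) :=
  Finset.univ.filter fun j => gridCell a h j ⊆ A

noncomputable def outerCells : Finset (Fin n → Fin k) :=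
  Finset.univ.filter fun j => gridCell a h j ⊆ (closure A)ᶜ

noncomputable def boundaryCells : Finset (Fin n → Fin k) :=
  Finset.univ.filter fun j => (gridCell a h j ∩ frontier A).Nonempty

variable {k a h A}

lemma mem_innerCells_or_mem_outerCells_or_mem_boundaryCells (j : Fin n → Fin k) :
    j ∈ innerCells k a h A ∨ j ∈ outerCells k a h A ∨ j ∈ boundaryCells k a h A := by
  simp only [innerCells, outerCells, boundaryCells, Finset.mem_filter, Finset.mem_univ, true_and]
  by_cases hj : (gridCell a h j ∩ frontier A).Nonempty
  · exact .inr (.inr hj)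
  rcases (convex_gridCell a h j).isPreconnected.subset_interior_or_subset_compl_closure hj
    with hint | hext
  · exact .inl (hint.trans interior_subset)
  · exact .inr (.inl hext)

lemma mem_innerCells_union_boundaryCells {j : Fin n → Fin k}
    (hj : (gridCell a h j ∩ A).Nonempty) : j ∈ innerCells k a h A ∪ boundaryCells k a h A := by
  obtain ⟨y, hyj, hyA⟩ := hj
  rcases mem_innerCells_or_mem_outerCells_or_mem_boundaryCells (a := a) (h := h) (A := A) j
    with hin | hout | hbd
  · exact Finset.mem_union_left _ hin
  · exact absurd (subset_closure hyA) ((Finset.mem_filter.1 hout).2 hyj)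
  · exact Finset.mem_union_right _ hbd

lemma mem_outerCells_union_boundaryCells {j : Fin n → Fin k}
    (hj : (gridCell a h j \ closure A).Nonempty) :
    j ∈ outerCells k a h A ∪ boundaryCells k a h A := by
  obtain ⟨y, hyj, hyA⟩ := hj
  rcases mem_innerCells_or_mem_outerCells_or_mem_boundaryCells (a := a) (h := h) (A := A) j
    with hin | hout | hbd
  · exact absurd (subset_closure ((Finset.mem_filter.1 hin).2 hyj)) hyA
  · exact Finset.mem_union_left _ hout
  · exact Finset.mem_union_right _ hbd

lemma gridSeparated_innerCells_outerCells (hh : 0 ≤ h) :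
    GridSeparated (innerCells k a h A) (outerCells k a h A) := by
  intro w hw b hb hwb
  obtain ⟨y, hyw, hyb⟩ := gridCell_inter_nonempty (a := a) hh hwb
  exact (Finset.mem_filter.1 hb).2 hyb (subset_closure ((Finset.mem_filter.1 hw).2 hyw))

end Cells

theorem statement_2_general (n : ℕ) (csharp : ℝ) (hcsharp : csharp ∈ Set.Ioo (0 : ℝ) 1) :
    ∃ cstar : ℝ, cstar ∈ Set.Ioo (0 : ℝ) 1 ∧
      ∀ (r : ℝ), 0 < r → ∀ (c : Fin n → ℝ) (A : Set (Fin n → ℝ)), IsOpen A →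
        csharp * r ^ n ≤
          min (volume (A ∩ {y : Fin n → ℝ | ∀ i, |y i - c i| ≤ r/2})).toReal
              (volume ({y : Fin n → ℝ | ∀ i, |y i - c i| ≤ r/2} \ closure A)).toReal →
        ∀ k : ℕ, 0 < k →
          cstar * (k : ℝ) ^ (n - 1) ≤
            ((Finset.univ.filter (fun j : Fin n → Fin k =>
              ({y : Fin n → ℝ | ∀ i, c i - r/2 + (j i : ℝ) * (r/k) ≤ y i ∧
                  y i ≤ c i - r/2 + ((j i : ℝ) + 1) * (r/k)} ∩ frontier A).Nonempty)).card : ℝ) := by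
  obtain ⟨hc0, hc1⟩ := hcsharp
  refine ⟨csharp / 2 ^ (n + 1), ⟨by positivity, ?_⟩, ?_⟩
  · exact (div_le_self hc0.le (one_le_pow₀ one_le_two)).trans_lt hc1
  intro r hr c A _ hvol k hk
  let a : Fin n → ℝ := fun i => c i - r / 2
  change _ ≤ ((boundaryCells k a (r / k) A).card : ℝ)
  have hunion : ∀ F : Finset (Fin n → Fin k),
      ((F ∪ boundaryCells k a (r / k) A).card : ℝ) ≤
        F.card + (boundaryCells k a (r / k) A).card :=
    fun F => by exact_mod_cast Finset.card_union_le _ _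
  have hinner := mul_pow_le_card_of_inter_nonempty hk hr inter_subset_right
    (fun j hj => mem_innerCells_union_boundaryCells (hj.mono fun y hy => ⟨hy.1, hy.2.1⟩))
    (hvol.trans (min_le_left _ _))
  have houter := mul_pow_le_card_of_inter_nonempty hk hr sdiff_subset
    (fun j hj => mem_outerCells_union_boundaryCells (hj.mono fun y hy => ⟨hy.1, hy.2.2⟩))
    (hvol.trans (min_le_right _ _))
  exact grid_isoperimetric_of_le_add hk n hc0
    (mem_innerCells_or_mem_outerCells_or_mem_boundaryCells (h := r / k) (A := A))
    (gridSeparated_innerCells_outerCells (by positivity))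
    (hinner.trans (hunion _)) (houter.trans (hunion _))

/-- if `A` occupies and misses a definite fraction of the cube `Q_r`,
then at least `c⋆ k^(n-1)` of the `k^n` subcubes of a grid decomposition of `Q_r`
meet `∂A`. -/
theorem statement_2 (n : ℕ) (hn : 1 ≤ n) (csharp : ℝ) (hcsharp : csharp ∈ Set.Ioo (0 : ℝ) 1) :
    ∃ cstar : ℝ, cstar ∈ Set.Ioo (0 : ℝ) 1 ∧
      ∀ (r : ℝ), 0 < r → ∀ (c : Fin n → ℝ) (A : Set (Fin n → ℝ)), IsOpen A →
        csharp * r ^ n ≤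
          min (volume (A ∩ {y : Fin n → ℝ | ∀ i, |y i - c i| ≤ r/2})).toReal
              (volume ({y : Fin n → ℝ | ∀ i, |y i - c i| ≤ r/2} \ closure A)).toReal →
        ∀ k : ℕ, 0 < k →
          cstar * (k : ℝ) ^ (n - 1) ≤
            ((Finset.univ.filter (fun j : Fin n → Fin k =>
              ({y : Fin n → ℝ | ∀ i, c i - r/2 + (j i : ℝ) * (r/k) ≤ y i ∧
                  y i ≤ c i - r/2 + ((j i : ℝ) + 1) * (r/k)} ∩ frontier A).Nonempty)).card : ℝ) :=
  statement_2_general n csharp hcsharp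
end

section
/- Let $n \ge 1$, $s \in (0,1/2)$, and let $K : \mathbb{R}^n \times \mathbb{R}^n \to [0, +\infty]$ be a measurable symmetric kernel (i.e. $K(x,y) = K(y,x)$). Let $W : \mathbb{R}^n \times \mathbb{R} \to [0, +\infty)$ be measurable, continuous in the second variable, with $W(x, \pm 1) = 0$ for a.e. $x$, and with $\inf\{W(x,r) : x \in \mathbb{R}^n,\ |r| \le \theta\} > 0$ for every $\theta \in [0,1)$. Fix an open set $\Omega \subseteq \mathbb{R}^n$. Suppose $u_\varepsilon \to u$ in $L^1_{loc}(\mathbb{R}^n)$ with $\|u_\varepsilon\|_{L^\infty} \le 1$, and $\liminf_{\varepsilon \to 0^+} \mathcal{E}_\varepsilon(u_\varepsilon; \Omega) < +\infty$, where $\mathcal{E}_\varepsilon(v; \Omega) := \frac{1}{2}\iint_{\mathcal{C}_\Omega} |v(x)-v(y)|^2 K(x,y)\,dx\,dy + \varepsilon^{-2s}\int_\Omega W(x, v(x))\,dx$. Then $u|_\Omega = \chi_E - \chi_{\Omega \setminus E}$ a.e. for some measurable $E \subseteq \Omega$, and $\frac{1}{2}\iint_{\mathcal{C}_\Omega} |u(x)-u(y)|^2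 K(x,y)\,dx\,dy \le \liminf_{\varepsilon \to 0^+} \mathcal{E}_\varepsilon(u_\varepsilon; \Omega)$. -/
open MeasureTheory Metric Set Filter
open scoped ENNReal Classical
open scoped Topology

/-- The cross-shaped set `C_Ω = (ℝⁿ × ℝⁿ) \ ((ℝⁿ \ Ω) × (ℝⁿ \ Ω))`. -/
def crossSet {n : ℕ} (Ω : Set (EuclideanSpace ℝ (Fin n))) :
    Set (EuclideanSpace ℝ (Fin n) × EuclideanSpace ℝ (Fin n)) :=
  {p | p.1 ∈ Ω ∨ p.2 ∈ Ω}

/-- The kinetic (Gagliardo-type) part of the energy. -/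
noncomputable def kinEnergy {n : ℕ}
    (K : EuclideanSpace ℝ (Fin n) → EuclideanSpace ℝ (Fin n) → ℝ)
    (v : EuclideanSpace ℝ (Fin n) → ℝ) (Ω : Set (EuclideanSpace ℝ (Fin n))) : ℝ≥0∞ :=
  (1/2 : ℝ≥0∞) * ∫⁻ p in crossSet Ω, ENNReal.ofReal (|v p.1 - v p.2| ^ 2 * K p.1 p.2)

/-- The rescaled Ginzburg–Landau-type energy `E_ε`. -/
noncomputable def glEnergy {n : ℕ} (s : ℝ)
    (K : EuclideanSpace ℝ (Fin n) → EuclideanSpace ℝ (Fin n) → ℝ)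
    (W : EuclideanSpace ℝ (Fin n) → ℝ → ℝ) (ε : ℝ)
    (v : EuclideanSpace ℝ (Fin n) → ℝ) (Ω : Set (EuclideanSpace ℝ (Fin n))) : ℝ≥0∞ :=
  kinEnergy K v Ω +
    ENNReal.ofReal (ε ^ (-(2*s))) * ∫⁻ x in Ω, ENNReal.ofReal (W x (v x))

/-!
Pick `εₖ → 0⁺` along which the energies converge to their liminf and the `L¹` errors on
`B(0, k + 1)` are summable, so that `u_{εₖ} → u` a.e. The potential term is at most `εₖ^{2s}`
times a bounded quantity, hence tends to `0`; by Fatou and the continuity of `W x`,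
`W(x, u(x)) = 0` a.e. on `Ω`, and the positivity of `W` away from `±1` forces `u = ±1` there.
Fatou's lemma on `C_Ω` then bounds the kinetic term.
-/

theorem Filter.exists_seq_tendsto_liminf_forall {α β : Type*} [CompleteLinearOrder β]
    [TopologicalSpace β] [FirstCountableTopology β] [OrderTopology β]
    {F : Filter α} [F.NeBot] [F.IsCountablyGenerated] (f : α → β) {P : ℕ → α → Prop}
    (hP : ∀ k, ∀ᶠ a in F, P k a) :
    ∃ e : ℕ → α, Tendsto e atTop F ∧ Tendsto (f ∘ e) atTop (𝓝 (liminf f F)) ∧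
      ∀ k, P k (e k) := by
  obtain ⟨x, hfx, hx⟩ := exists_seq_tendsto_liminf (f := F) (u := f)
  obtain ⟨φ, hφ, hPφ⟩ := extraction_forall_of_eventually fun k => hx.eventually (hP k)
  exact ⟨x ∘ φ, hx.comp hφ.tendsto_atTop, hfx.comp hφ.tendsto_atTop, hPφ⟩

theorem ae_tendsto_of_lintegral_edist_le {X Y : Type*} [MeasurableSpace X]
    [PseudoEMetricSpace Y] {μ : Measure X} {S : ℕ → Set X} (hS : Monotone S)
    (hcover : ⋃ m, S m = univ) {g : ℕ → X → Y} {g₀ : X → Y}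
    (hmeas : ∀ k, AEMeasurable (fun x => edist (g k x) (g₀ x)) μ) {δ : ℕ → ℝ≥0∞}
    (hδ : ∑' k, δ k ≠ ⊤) (hle : ∀ k, ∫⁻ x in S k, edist (g k x) (g₀ x) ∂μ ≤ δ k) :
    ∀ᵐ x ∂μ, Tendsto (fun k => g k x) atTop (𝓝 (g₀ x)) := by
  rw [← Measure.restrict_univ (μ := μ), ← hcover, ae_restrict_iUnion_iff]
  intro m
  have hsum : ∫⁻ x in S m, ∑' k, edist (g (k + m) x) (g₀ x) ∂μ ≠ ⊤ := by
    rw [lintegral_tsum fun k => (hmeas (k + m)).restrict]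
    refine ne_top_of_le_ne_top hδ ?_
    calc ∑' k, ∫⁻ x in S m, edist (g (k + m) x) (g₀ x) ∂μ
        ≤ ∑' k, δ (k + m) := ENNReal.tsum_le_tsum fun k =>
          (lintegral_mono_set (hS (Nat.le_add_left m k))).trans (hle (k + m))
      _ ≤ ∑' k, δ k := ENNReal.tsum_comp_le_tsum_of_injective (add_left_injective m) δ
  filter_upwards [ae_lt_top' (AEMeasurable.tsum fun k => (hmeas (k + m)).restrict) hsum]
    with x hx
  rw [tendsto_iff_edist_tendsto_0, ← tendsto_add_atTop_iff_nat m]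
  exact ENNReal.tendsto_atTop_zero_of_tsum_ne_top hx.ne

theorem lintegral_edist_eq_ofReal_integral_abs_sub {X : Type*} [MeasurableSpace X]
    {μ : Measure X} {g h : X → ℝ} (hi : Integrable (fun x => g x - h x) μ) :
    ∫⁻ x, edist (g x) (h x) ∂μ = ENNReal.ofReal (∫ x, |g x - h x| ∂μ) := by
  simp_rw [edist_eq_enorm_sub, ← Real.norm_eq_abs]
  exact (ofReal_integral_norm_eq_lintegral_enorm hi).symm

theorem tendsto_zero_of_rpow_neg_mul_le {ι : Type*} {l : Filter ι} {e : ι → ℝ}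
    (he : Tendsto e l (𝓝[>] 0)) {t : ℝ} (ht : 0 < t) {I : ι → ℝ≥0∞} {C : ℝ≥0∞}
    (hC : C ≠ ⊤) (hle : ∀ᶠ i in l, ENNReal.ofReal (e i ^ (-t)) * I i ≤ C) :
    Tendsto I l (𝓝 0) := by
  have hpow : Tendsto (fun i => ENNReal.ofReal (e i ^ t)) l (𝓝 0) := by
    have h := (Real.continuousAt_rpow_const 0 t (Or.inr ht.le)).tendsto.comp
      (he.mono_right nhdsWithin_le_nhds)
    rw [Real.zero_rpow ht.ne'] at h
    simpa using ENNReal.tendsto_ofReal h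
  have hbound : Tendsto (fun i => ENNReal.ofReal (e i ^ t) * C) l (𝓝 0) := by
    simpa using ENNReal.Tendsto.mul_const hpow (Or.inr hC)
  refine tendsto_of_tendsto_of_tendsto_of_le_of_le' tendsto_const_nhds hbound
    (Eventually.of_forall fun _ => zero_le) ?_
  filter_upwards [hle, he self_mem_nhdsWithin] with i hi (hpos : 0 < e i)
  have hunit : ENNReal.ofReal (e i ^ t) * ENNReal.ofReal (e i ^ (-t)) = 1 := by
    rw [← ENNReal.ofReal_mul (Real.rpow_nonneg hpos.le _), ← Real.rpow_add hpos,
      add_neg_cancel, Real.rpow_zero, ENNReal.ofReal_one]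
  calc I i = ENNReal.ofReal (e i ^ t) * (ENNReal.ofReal (e i ^ (-t)) * I i) := by
        rw [← mul_assoc, hunit, one_mul]
    _ ≤ ENNReal.ofReal (e i ^ t) * C := mul_le_mul_right hi _

theorem lintegral_le_liminf_of_ae_tendsto {X ι : Type*} [MeasurableSpace X] {μ : Measure X}
    {l : Filter ι} [l.NeBot] [l.IsCountablyGenerated] {F : ι → X → ℝ≥0∞} {G : X → ℝ≥0∞}
    (hF : ∀ i, AEMeasurable (F i) μ) (h : ∀ᵐ x ∂μ, Tendsto (fun i => F i x) l (𝓝 (G x))) :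
    ∫⁻ x, G x ∂μ ≤ liminf (fun i => ∫⁻ x, F i x ∂μ) l :=
  (lintegral_congr_ae (h.mono fun _ hx => hx.liminf_eq.symm)).trans_le (lintegral_liminf_le' hF)

theorem eq_one_or_eq_neg_one_of_nonpos {X : Type*} {W : X → ℝ → ℝ}
    (hWpos : ∀ θ ∈ Set.Ico (0 : ℝ) 1, ∃ γ > 0, ∀ x r, |r| ≤ θ → γ ≤ W x r)
    {x : X} {r : ℝ} (hr : |r| ≤ 1) (hW : W x r ≤ 0) : r = 1 ∨ r = -1 := by
  rcases hr.lt_or_eq with hlt | heq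
  · obtain ⟨γ, hγ, hγW⟩ := hWpos |r| ⟨abs_nonneg r, hlt⟩
    linarith [hγW x r le_rfl]
  · exact (abs_eq zero_le_one).1 heq

theorem kinEnergy_le_liminf_of_ae_tendsto {n : ℕ}
    {K : EuclideanSpace ℝ (Fin n) → EuclideanSpace ℝ (Fin n) → ℝ}
    (hKmeas : Measurable (Function.uncurry K)) {v : ℕ → EuclideanSpace ℝ (Fin n) → ℝ}
    (hv : ∀ k, Measurable (v k)) {u : EuclideanSpace ℝ (Fin n) → ℝ}
    (h : ∀ᵐ x, Tendsto (fun k => v k x) atTop (𝓝 (u x))) (Ω : Set (EuclideanSpace ℝ (Fin n))) :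
    kinEnergy K u Ω ≤ liminf (fun k => kinEnergy K (v k) Ω) atTop := by
  unfold kinEnergy
  rw [ENNReal.liminf_const_mul_of_ne_top (by simp)]
  gcongr
  refine lintegral_le_liminf_of_ae_tendsto (fun k => ?_) (ae_restrict_of_ae ?_)
  · exact ((((hv k).comp measurable_fst).sub ((hv k).comp measurable_snd)).abs.pow_const
      2).mul hKmeas |>.ennreal_ofReal.aemeasurable
  · filter_upwards [Measure.quasiMeasurePreserving_fst.ae h,
      Measure.quasiMeasurePreserving_snd.ae h] with p h₁ h₂
    exact ENNReal.tendsto_ofReal ((((h₁.sub h₂).abs.pow 2).mul_const _))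

theorem statement_7_general (n : ℕ) (s : ℝ) (hs : s ∈ Set.Ioo (0 : ℝ) (1/2))
    (K : EuclideanSpace ℝ (Fin n) → EuclideanSpace ℝ (Fin n) → ℝ)
    (hKmeas : Measurable (Function.uncurry K))
    (W : EuclideanSpace ℝ (Fin n) → ℝ → ℝ)
    (hWmeas : Measurable (Function.uncurry W))
    (hWcont : ∀ x, Continuous (W x))
    (hWpos : ∀ θ ∈ Set.Ico (0 : ℝ) 1, ∃ γ > 0, ∀ x r, |r| ≤ θ → γ ≤ W x r)
    (Ω : Set (EuclideanSpace ℝ (Fin n))) (hΩ : IsOpen Ω)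
    (uε : ℝ → EuclideanSpace ℝ (Fin n) → ℝ) (huεmeas : ∀ ε, Measurable (uε ε))
    (huεbd : ∀ ε x, |uε ε x| ≤ 1)
    (u : EuclideanSpace ℝ (Fin n) → ℝ) (humeas : Measurable u) (hubd : ∀ x, |u x| ≤ 1)
    (hconv : ∀ R : ℝ, Tendsto (fun ε => ∫ x in ball (0 : EuclideanSpace ℝ (Fin n)) R,
        |uε ε x - u x|) (nhdsWithin 0 (Set.Ioi 0)) (nhds 0))
    (hfin : Filter.liminf (fun ε => glEnergy s K W ε (uε ε) Ω)
        (nhdsWithin 0 (Set.Ioi 0)) < ⊤) :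
    ∃ E : Set (EuclideanSpace ℝ (Fin n)), MeasurableSet E ∧ E ⊆ Ω ∧
      (∀ᵐ x ∂(volume.restrict Ω), u x = if x ∈ E then (1 : ℝ) else -1) ∧
      kinEnergy K u Ω ≤
        Filter.liminf (fun ε => glEnergy s K W ε (uε ε) Ω)
          (nhdsWithin 0 (Set.Ioi 0)) := by
  set L := liminf (fun ε => glEnergy s K W ε (uε ε) Ω) (𝓝[>] 0)
  have hlocal : ∀ k : ℕ, ∀ᶠ ε in 𝓝[>] 0,
      ∫⁻ x in ball 0 (k + 1), edist (uε ε x) (u x) < 2⁻¹ ^ k := by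
    intro k
    have hint : ∀ ε, IntegrableOn (fun x => uε ε x - u x) (ball 0 (k + 1)) :=
      fun ε => .of_bound measure_ball_lt_top ((huεmeas ε).sub humeas).aestronglyMeasurable 2
        (ae_of_all _ fun x => (abs_sub _ _).trans (by linarith [huεbd ε x, hubd x]))
    simp_rw [lintegral_edist_eq_ofReal_integral_abs_sub (hint _)]
    have hpos : ENNReal.ofReal 0 < 2⁻¹ ^ k := by simp [ENNReal.pow_pos]
    exact (ENNReal.tendsto_ofReal (hconv (k + 1))).eventually_lt_const hpos
  obtain ⟨e, he, hfe, hek⟩ :=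
    Filter.exists_seq_tendsto_liminf_forall (fun ε => glEnergy s K W ε (uε ε) Ω) hlocal
  have hae : ∀ᵐ x, Tendsto (fun k => uε (e k) x) atTop (𝓝 (u x)) :=
    ae_tendsto_of_lintegral_edist_le (S := fun k : ℕ => ball 0 (k + 1))
      (fun _ _ hkm => ball_subset_ball (by gcongr)) (iUnion_ball_nat_succ 0)
      (fun k => ((huεmeas (e k)).edist humeas).aemeasurable)
      (by simp [ENNReal.tsum_geometric]) fun k => (hek k).le
  have hpot : Tendsto (fun k => ∫⁻ x in Ω, ENNReal.ofReal (W x (uε (e k) x))) atTop (𝓝 0) :=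
    tendsto_zero_of_rpow_neg_mul_le he (by linarith [hs.1])
      (ENNReal.add_ne_top.2 ⟨hfin.ne, ENNReal.one_ne_top⟩)
      ((hfe.eventually_lt_const (ENNReal.lt_add_right hfin.ne one_ne_zero)).mono
        fun k hk => le_add_self.trans hk.le)
  have hWu : ∀ᵐ x ∂volume.restrict Ω, W x (u x) ≤ 0 := by
    have hmeas : Measurable fun x => ENNReal.ofReal (W x (u x)) :=
      (hWmeas.comp (measurable_id.prodMk humeas)).ennreal_ofReal
    have hzero : ∫⁻ x in Ω, ENNReal.ofReal (W x (u x)) = 0 := by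
      refine le_antisymm ?_ zero_le
      rw [← hpot.liminf_eq]
      refine lintegral_le_liminf_of_ae_tendsto (fun k => ?_) (ae_restrict_of_ae ?_)
      · exact (hWmeas.comp (measurable_id.prodMk (huεmeas _))).ennreal_ofReal.aemeasurable
      · exact hae.mono fun x hx => ENNReal.tendsto_ofReal (((hWcont x).tendsto _).comp hx)
    filter_upwards [(lintegral_eq_zero_iff hmeas).1 hzero] with x hx
    exact ENNReal.ofReal_eq_zero.1 hx
  refine ⟨Ω ∩ u ⁻¹' {1}, hΩ.measurableSet.inter (humeas (measurableSet_singleton 1)),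
    inter_subset_left, ?_, ?_⟩
  · filter_upwards [hWu, ae_restrict_mem hΩ.measurableSet] with x hx hxΩ
    rcases eq_one_or_eq_neg_one_of_nonpos hWpos (hubd x) hx with h | h <;> simp [h, hxΩ]
  · calc kinEnergy K u Ω ≤ liminf (fun k => kinEnergy K (uε (e k)) Ω) atTop :=
          kinEnergy_le_liminf_of_ae_tendsto hKmeas (fun k => huεmeas (e k)) hae Ω
      _ ≤ liminf (fun k => glEnergy s K W (e k) (uε (e k)) Ω) atTop :=
          liminf_le_liminf (.of_forall fun k => le_self_add)
      _ = L := hfe.liminf_eq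

/-- the Γ-liminf inequality for `E_ε` as `ε → 0⁺`, `s ∈ (0,1/2)`. -/
theorem statement_7 (n : ℕ) (hn : 1 ≤ n) (s : ℝ) (hs : s ∈ Set.Ioo (0 : ℝ) (1/2))
    (K : EuclideanSpace ℝ (Fin n) → EuclideanSpace ℝ (Fin n) → ℝ)
    (hKmeas : Measurable (Function.uncurry K))
    (hKnonneg : ∀ x y, 0 ≤ K x y) (hKsym : ∀ x y, K x y = K y x)
    (W : EuclideanSpace ℝ (Fin n) → ℝ → ℝ)
    (hWmeas : Measurable (Function.uncurry W))
    (hWnonneg : ∀ x r, 0 ≤ W x r) (hWcont : ∀ x, Continuous (W x))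
    (hWzero : ∀ᵐ x : EuclideanSpace ℝ (Fin n), W x 1 = 0 ∧ W x (-1) = 0)
    (hWpos : ∀ θ ∈ Set.Ico (0 : ℝ) 1, ∃ γ > 0, ∀ x r, |r| ≤ θ → γ ≤ W x r)
    (Ω : Set (EuclideanSpace ℝ (Fin n))) (hΩ : IsOpen Ω)
    (uε : ℝ → EuclideanSpace ℝ (Fin n) → ℝ) (huεmeas : ∀ ε, Measurable (uε ε))
    (huεbd : ∀ ε x, |uε ε x| ≤ 1)
    (u : EuclideanSpace ℝ (Fin n) → ℝ) (humeas : Measurable u) (hubd : ∀ x, |u x| ≤ 1)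
    (hconv : ∀ R : ℝ, Tendsto (fun ε => ∫ x in ball (0 : EuclideanSpace ℝ (Fin n)) R,
        |uε ε x - u x|) (nhdsWithin 0 (Set.Ioi 0)) (nhds 0))
    (hfin : Filter.liminf (fun ε => glEnergy s K W ε (uε ε) Ω)
        (nhdsWithin 0 (Set.Ioi 0)) < ⊤) :
    ∃ E : Set (EuclideanSpace ℝ (Fin n)), MeasurableSet E ∧ E ⊆ Ω ∧
      (∀ᵐ x ∂(volume.restrict Ω), u x = if x ∈ E then (1 : ℝ) else -1) ∧
      kinEnergy K u Ω ≤
        Filter.liminf (fun ε => glEnergy s K W ε (uε ε) Ω)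
          (nhdsWithin 0 (Set.Ioi 0)) :=
  statement_7_general n s hs K hKmeas W hWmeas hWcont hWpos Ω hΩ uε huεmeas huεbd u humeas hubd
    hconv hfin
end
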